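/- arXiv:0811.1684 — 8 statements merged into one kernel-verified Lean document; each statement's English description precedes it below -/
import Mathlib

section
/- Define a doubly-indexed sequence i : ℕ → ℕ → ℤ by arbitrary initial values i 0 k (k = 0,…,d-1), and recursively for j ≥ 1: i j 0 = i (j-1) 0 and i j k = i j (k-1) + i (j-1) k for 1 ≤ k ≤ d-1. Then for all j ≥ 1 and 0 ≤ k ≤ d-1, i j k = ∑_{m=0}^{k} binom(k-m+j-1, j-1) · i 0 m. -/
/-!
Each step of the recursion replaces a row by its prefix sums, and the closed form
`binomSum f j k = ∑ m ≤ k, C(k - m + j, j) f m` satisfies the same recursion by Pascal's rule,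
so the two agree row by row.
-/

open Finset

def binomSum (f : ℕ → ℤ) (j k : ℕ) : ℤ :=
  ∑ m ∈ range (k + 1), ((k - m + j).choose j : ℤ) * f m

lemma binomSum_zero_right (f : ℕ → ℤ) (j : ℕ) : binomSum f j 0 = f 0 := by
  simp [binomSum]

lemma binomSum_zero_succ (f : ℕ → ℤ) (k : ℕ) :
    binomSum f 0 (k + 1) = binomSum f 0 k + f (k + 1) := by
  simp [binomSum, sum_range_succ _ (k + 1)]

lemma binomSum_succ_succ (f : ℕ → ℤ) (j k : ℕ) :
    binomSum f (j + 1) (k + 1) = binomSum f (j + 1) k + binomSum f j (k + 1) := by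
  have pascal : ∀ m ∈ range (k + 1),
      ((k + 1 - m + (j + 1)).choose (j + 1) : ℤ) * f m
        = ((k - m + (j + 1)).choose (j + 1) : ℤ) * f m + ((k + 1 - m + j).choose j : ℤ) * f m := by
    intro m hm
    have hmk : k + 1 - m + j = k - m + (j + 1) := by have := mem_range.mp hm; omega
    rw [hmk, show k + 1 - m + (j + 1) = k - m + (j + 1) + 1 by omega, Nat.choose_succ_succ']
    push_cast
    ring
  simp only [binomSum, sum_range_succ _ (k + 1), Nat.sub_self, zero_add, Nat.choose_self,
    sum_congr rfl pascal, sum_add_distrib]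
  ring

lemma eq_binomSum_of_rec {a : ℕ → ℕ → ℤ} {n : ℕ} (hcol : ∀ j, a (j + 1) 0 = a j 0)
    (hrow : ∀ j k, k < n → a (j + 1) (k + 1) = a (j + 1) k + a j (k + 1)) :
    ∀ j k, k ≤ n → a (j + 1) k = binomSum (a 0) j k := by
  intro j
  induction j with
  | zero =>
    intro k hk
    induction k with
    | zero => rw [hcol, binomSum_zero_right]
    | succ k ihk => rw [hrow 0 k hk, ihk (by omega), binomSum_zero_succ]
  | succ j ihj =>
    intro k hk
    induction k with
    | zero => rw [hcol, ihj 0 hk, binomSum_zero_right, binomSum_zero_right]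
    | succ k ihk => rw [hrow _ k hk, ihk (by omega), ihj _ hk, binomSum_succ_succ]

theorem stage2_state_general (d : ℕ) (i : ℕ → ℕ → ℤ)
    (h0 : ∀ j, 1 ≤ j → i j 0 = i (j - 1) 0)
    (hrec : ∀ j, 1 ≤ j → ∀ k, 1 ≤ k → k ≤ d - 1 →
      i j k = i j (k - 1) + i (j - 1) k) :
    ∀ j, 1 ≤ j → ∀ k, k ≤ d - 1 →
      i j k = ∑ m ∈ Finset.range (k + 1),
        (Nat.choose (k - m + j - 1) (j - 1) : ℤ) * i 0 m := by
  rintro (_ | j) hj k hk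
  · omega
  have hcol : ∀ j, i (j + 1) 0 = i j 0 := fun j => h0 (j + 1) (by omega)
  have hrow : ∀ j k, k < d - 1 → i (j + 1) (k + 1) = i (j + 1) k + i j (k + 1) :=
    fun j k hk => hrec (j + 1) (by omega) (k + 1) (by omega) hk
  rw [eq_binomSum_of_rec hcol hrow j k hk, binomSum]
  simp only [← add_assoc, Nat.add_sub_cancel]

theorem stage2_state (d : ℕ) (hd : 0 < d) (i : ℕ → ℕ → ℤ)
    (h0 : ∀ j, 1 ≤ j → i j 0 = i (j - 1) 0)
    (hrec : ∀ j, 1 ≤ j → ∀ k, 1 ≤ k → k ≤ d - 1 →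
      i j k = i j (k - 1) + i (j - 1) k) :
    ∀ j, 1 ≤ j → ∀ k, k ≤ d - 1 →
      i j k = ∑ m ∈ Finset.range (k + 1),
        (Nat.choose (k - m + j - 1) (j - 1) : ℤ) * i 0 m :=
  stage2_state_general d i h0 hrec
end

section
/- Let p be a prime and let k, m be natural numbers with m ≤ k+1 ≤ p-1. Then binom(k - m + p, p - 1) ≡ 0 (mod p) when m ≠ k+1, and binom(k - m + p, p - 1) ≡ 1 (mod p) when m = k+1. -/
theorem Nat.Prime.dvd_choose_pred {p n : ℕ} (hp : p.Prime) (hpn : p ≤ n) (hn : n < 2 * p - 1) :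
    p ∣ n.choose (p - 1) :=
  hp.dvd_choose (Nat.sub_lt hp.pos one_pos) (by omega) hpn

theorem binom_stage4_mod_p (p : ℕ) (hp : p.Prime) (k m : ℕ)
    (hm : m ≤ k + 1) (hk : k + 1 ≤ p - 1) :
    (m ≠ k + 1 → Nat.choose (k + p - m) (p - 1) ≡ 0 [MOD p]) ∧
    (m = k + 1 → Nat.choose (k + p - m) (p - 1) ≡ 1 [MOD p]) := by
  constructor
  · intro hne
    exact Nat.modEq_zero_iff_dvd.mpr (hp.dvd_choose_pred (by omega) (by omega))
  · rintro rfl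
    rw [show k + p - (k + 1) = p - 1 by omega, Nat.choose_self]
end

section
/- Let p be an odd prime. Then ∑_{t=0}^{(p-1)/2} ∑_{m=0}^{2t} binom(2t - m + p - 2, p - 2) · x_m ≡ ∑_{t=0}^{(p-1)/2} x_{2t} + ∑_{t=0}^{(p-3)/2} (p-1) · x_{2t+1} (mod p), for any integers x_0, …, x_{p-1}. -/
theorem lemma_i_d_plus_one (p : ℕ) (hp : p.Prime) (hodd : Odd p) (x : ℕ → ℤ) :
    ∑ t ∈ Finset.range ((p - 1) / 2 + 1), ∑ m ∈ Finset.range (2 * t + 1),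
        (Nat.choose (2 * t - m + p - 2) (p - 2) : ℤ) * x m ≡
      (∑ t ∈ Finset.range ((p - 1) / 2 + 1), x (2 * t)) +
        ∑ t ∈ Finset.range ((p - 3) / 2 + 1), ((p : ℤ) - 1) * x (2 * t + 1)
      [ZMOD (p : ℤ)] := by
  obtain ⟨n, rfl⟩ : ∃ n, p = 2 * n + 3 := by
    obtain ⟨k, hk⟩ := hodd
    have h2 := hp.two_le
    exact ⟨k - 1, by omega⟩
  have h1 : (2 * n + 3 - 1) / 2 + 1 = n + 2 := by omega
  have h3 : (2 * n + 3 - 3) / 2 + 1 = n + 1 := by omega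
  rw [h1, h3, ← ZMod.intCast_eq_intCast_iff]
  push_cast
  have hzero : ((2 * n + 3 : ℕ) : ZMod (2 * n + 3)) = 0 := ZMod.natCast_self _
  push_cast at hzero
  have hinner : ∀ t ≤ n + 1,
      (∑ m ∈ Finset.range (2 * t + 1),
        (Nat.choose (2 * t - m + (2 * n + 3) - 2) (2 * n + 3 - 2) : ZMod (2 * n + 3)) * (x m : ZMod (2 * n + 3)))
      = (x (2 * t) : ZMod (2 * n + 3)) +
          (if t = 0 then 0 else -(x (2 * t - 1) : ZMod (2 * n + 3))) := by
    intro t ht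
    match t with
    | 0 =>
      rw [show 2 * 0 + 1 = 1 from rfl, Finset.sum_range_one]
      have e : 2 * 0 - 0 + (2 * n + 3) - 2 = 2 * n + 3 - 2 := by omega
      rw [e, Nat.choose_self]
      simp
    | t + 1 =>
      rw [show 2 * (t + 1) + 1 = (2 * t + 1) + 1 + 1 from by ring,
        Finset.sum_range_succ, Finset.sum_range_succ]
      have e1 : 2 * (t + 1) - (2 * t + 1 + 1) + (2 * n + 3) - 2 = 2 * n + 3 - 2 := by omega
      have e2 : 2 * (t + 1) - (2 * t + 1) + (2 * n + 3) - 2 = (2 * n + 3 - 2) + 1 := by omega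
      rw [e1, e2, Nat.choose_self, Nat.choose_succ_self_right]
      have hrest : (∑ m ∈ Finset.range (2 * t + 1),
          (Nat.choose (2 * (t + 1) - m + (2 * n + 3) - 2) (2 * n + 3 - 2) : ZMod (2 * n + 3)) * (x m : ZMod (2 * n + 3))) = 0 := by
        refine Finset.sum_eq_zero fun m hm => ?_
        have hm' : m ≤ 2 * t := by
          have := Finset.mem_range.mp hm; omega
        have harg : 2 * (t + 1) - m + (2 * n + 3) - 2 = (2 * n + 1) + (2 * (t + 1) - m) := by omega
        have hdvd : (2 * n + 3) ∣ Nat.choose ((2 * n + 1) + (2 * (t + 1) - m)) (2 * n + 1) := by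
          refine hp.dvd_choose_add (by omega) (by omega) (by omega)
        have : (Nat.choose ((2 * n + 1) + (2 * (t + 1) - m)) (2 * n + 1) : ZMod (2 * n + 3)) = 0 := by
          exact_mod_cast (ZMod.natCast_eq_zero_iff _ _).mpr hdvd
        rw [harg, show (2 * n + 3 - 2) = 2 * n + 1 from by omega, this, zero_mul]
      rw [hrest]
      have hm1 : ((2 * n + 3 - 2 + 1 : ℕ) : ZMod (2 * n + 3)) = -1 := by
        rw [show 2 * n + 3 - 2 + 1 = 2 * n + 2 from by omega]
        push_cast
        linear_combination hzero
      rw [hm1]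
      simp [show 2 * (t + 1) - 1 = 2 * t + 1 from by omega]
      ring_nf
  calc (∑ t ∈ Finset.range (n + 2), ∑ m ∈ Finset.range (2 * t + 1),
        (Nat.choose (2 * t - m + (2 * n + 3) - 2) (2 * n + 3 - 2) : ZMod (2 * n + 3)) * (x m : ZMod (2 * n + 3)))
      = ∑ t ∈ Finset.range (n + 2), ((x (2 * t) : ZMod (2 * n + 3)) +
          (if t = 0 then 0 else -(x (2 * t - 1) : ZMod (2 * n + 3)))) := by
        refine Finset.sum_congr rfl fun t ht => ?_
        exact hinner t (by have := Finset.mem_range.mp ht; omega)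
    _ = (∑ t ∈ Finset.range (n + 2), (x (2 * t) : ZMod (2 * n + 3))) +
          ∑ t ∈ Finset.range (n + 2), (if t = 0 then 0 else -(x (2 * t - 1) : ZMod (2 * n + 3))) := by
        rw [Finset.sum_add_distrib]
    _ = (∑ t ∈ Finset.range (n + 2), (x (2 * t) : ZMod (2 * n + 3))) +
          ∑ t ∈ Finset.range (n + 1), -(x (2 * t + 1) : ZMod (2 * n + 3)) := by
        congr 1
        rw [Finset.sum_range_succ']
        simp only [Nat.succ_ne_zero, if_false, if_pos rfl, add_zero, reduceIte]
        refine Finset.sum_congr rfl fun t ht => ?_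
        rw [show 2 * (t + 1) - 1 = 2 * t + 1 from by omega]
    _ = _ := by
        congr 1
        refine Finset.sum_congr rfl fun t ht => ?_
        linear_combination -((x (2 * t + 1) : ℤ) : ZMod (2 * n + 3)) * hzero
end

section
/- Let p be a prime. The map S : (ℤ/pℤ)^p → (ℤ/pℤ)^p sending (a_0, …, a_{p-1}) to (a_1, a_2, …, a_{p-1}, a_0) (the cyclic shift) can be written as a composition of elementary maps of the form E_{c,t} : x ↦ (…, x_t + x_c, …) which add the c-th coordinate to the t-th coordinate (c ≠ t), all other coordinates fixed. -/
namespace CyclicShiftAux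

variable {p : ℕ}

/-- abbreviation for the fold step in the theorem -/
def stepf (pr : ZMod p × ZMod p) (f : (ZMod p → ZMod p) → (ZMod p → ZMod p)) :
    (ZMod p → ZMod p) → (ZMod p → ZMod p) :=
  (fun x => Function.update x pr.2 (x pr.2 + x pr.1)) ∘ f

def evalL (L : List (ZMod p × ZMod p)) : (ZMod p → ZMod p) → (ZMod p → ZMod p) :=
  L.foldr stepf id

def Rz (f : (ZMod p → ZMod p) → (ZMod p → ZMod p)) : Prop :=
  ∃ L : List (ZMod p × ZMod p), (∀ pr ∈ L, pr.1 ≠ pr.2) ∧ evalL L = f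

lemma evalL_nil : evalL ([] : List (ZMod p × ZMod p)) = id := rfl

lemma evalL_cons (pr) (L : List (ZMod p × ZMod p)) :
    evalL (pr :: L) = stepf pr (evalL L) := rfl

lemma evalL_append (L₁ L₂ : List (ZMod p × ZMod p)) :
    evalL (L₁ ++ L₂) = evalL L₁ ∘ evalL L₂ := by
  induction L₁ with
  | nil => rfl
  | cons pr L ih =>
    simp only [List.cons_append, evalL_cons, ih, stepf]
    rfl

lemma Rz_id : Rz (p := p) id := ⟨[], by simp, rfl⟩

lemma Rz_comp {f g : (ZMod p → ZMod p) → (ZMod p → ZMod p)} (hf : Rz f) (hg : Rz g) :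
    Rz (f ∘ g) := by
  obtain ⟨L₁, h₁, e₁⟩ := hf
  obtain ⟨L₂, h₂, e₂⟩ := hg
  refine ⟨L₁ ++ L₂, ?_, by rw [evalL_append, e₁, e₂]⟩
  intro pr hpr
  rcases List.mem_append.1 hpr with h | h
  · exact h₁ pr h
  · exact h₂ pr h

/-- add k copies of coordinate c to coordinate t -/
def am (c t : ZMod p) (k : ZMod p) : (ZMod p → ZMod p) → (ZMod p → ZMod p) :=
  fun x => Function.update x t (x t + k * x c)

lemma evalL_replicate (c t : ZMod p) (hct : c ≠ t) (n : ℕ) :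
    evalL (List.replicate n (c, t)) = am c t (n : ZMod p) := by
  induction n with
  | zero =>
    funext x
    simp [evalL_nil, am]
  | succ n ih =>
    rw [List.replicate_succ, evalL_cons, ih]
    funext x
    simp only [stepf, Function.comp_apply, am]
    rw [Function.update_idem, Function.update_of_ne hct, Function.update_self]
    push_cast
    ring_nf

lemma Rz_am [NeZero p] (c t : ZMod p) (hct : c ≠ t) (k : ZMod p) : Rz (am c t k) := by
  refine ⟨List.replicate k.val (c, t), ?_, ?_⟩
  · intro pr hpr
    rw [List.eq_of_mem_replicate hpr]
    exact hct
  · rw [evalL_replicate c t hct, ZMod.natCast_zmod_val]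

/-- swap with sign: a gets -x b, b gets x a -/
def tg (a b : ZMod p) : (ZMod p → ZMod p) → (ZMod p → ZMod p) :=
  fun x i => if i = a then -x b else if i = b then x a else x i

lemma tg_eq (a b : ZMod p) (hab : a ≠ b) :
    am a b 1 ∘ am b a (-1) ∘ am a b 1 = tg a b := by
  funext x i
  simp only [Function.comp_apply, am, tg, Function.update_apply]
  split_ifs with h1 h2 <;> simp_all

lemma Rz_tg [NeZero p] (a b : ZMod p) (hab : a ≠ b) : Rz (tg a b) := by
  rw [← tg_eq a b hab]
  exact Rz_comp (Rz_am a b hab 1) (Rz_comp (Rz_am b a (Ne.symm hab) (-1)) (Rz_am a b hab 1))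

/-- partial shift -/
def H (k : ℕ) : (ZMod p → ZMod p) → (ZMod p → ZMod p) :=
  fun x i => if i.val < k then x (i + 1) else if i.val = k then (-1) ^ k * x 0 else x i

lemma H_zero [NeZero p] : H (p := p) 0 = id := by
  funext x i
  simp only [H, Nat.not_lt_zero, if_false, pow_zero, one_mul, id]
  split_ifs with h
  · rw [show i = 0 from (ZMod.val_eq_zero i).1 h]
  · rfl

lemma H_succ [NeZero p] (k : ℕ) (hk : k + 1 < p) :
    tg (p := p) (↑(k + 1)) (↑k) ∘ H k = H (k + 1) := by
  have hkp : k < p := Nat.lt_of_succ_lt hk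
  have hva : ((k + 1 : ℕ) : ZMod p).val = k + 1 := ZMod.val_natCast_of_lt hk
  have hvb : ((k : ℕ) : ZMod p).val = k := ZMod.val_natCast_of_lt hkp
  funext x i
  simp only [Function.comp_apply, tg, H]
  by_cases hia : i = ((k + 1 : ℕ) : ZMod p)
  · have hiv : i.val = k + 1 := by rw [hia, hva]
    rw [if_pos hia, if_neg (by rw [hvb]; omega), if_pos hvb,
        if_neg (by rw [hiv]; omega), if_pos hiv]
    ring
  · by_cases hib : i = ((k : ℕ) : ZMod p)
    · have hiv : i.val = k := by rw [hib, hvb]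
      rw [if_neg hia, if_pos hib, if_neg (by rw [hva]; omega),
          if_neg (by rw [hva]; omega), if_pos (by rw [hiv]; omega)]
      rw [hib]
      push_cast
      rfl
    · have hva' : i.val ≠ k + 1 := fun h => hia (by rw [← ZMod.natCast_zmod_val i, h])
      have hvb' : i.val ≠ k := fun h => hib (by rw [← ZMod.natCast_zmod_val i, h])
      rw [if_neg hia, if_neg hib, if_neg hvb', if_neg hva']
      by_cases hlt : i.val < k
      · rw [if_pos hlt, if_pos (by omega)]
      · rw [if_neg hlt, if_neg (by omega)]

lemma Rz_H [NeZero p] (k : ℕ) (hk : k < p) : Rz (H (p := p) k) := by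
  induction k with
  | zero => rw [H_zero]; exact Rz_id
  | succ k ih =>
    have hkp : k < p := Nat.lt_of_succ_lt hk
    have hab : ((k + 1 : ℕ) : ZMod p) ≠ ((k : ℕ) : ZMod p) := by
      intro h
      have := congrArg ZMod.val h
      rw [ZMod.val_natCast_of_lt hk, ZMod.val_natCast_of_lt hkp] at this
      omega
    rw [← H_succ k hk]
    exact Rz_comp (Rz_tg _ _ hab) (ih hkp)

lemma neg_one_pow (hp : p.Prime) : ((-1 : ZMod p)) ^ (p - 1) = 1 := by
  haveI : Fact p.Prime := ⟨hp⟩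
  exact ZMod.pow_card_sub_one_eq_one (by simp)

lemma H_top (hp : p.Prime) : H (p := p) (p - 1) = fun x i => x (i + 1) := by
  haveI : NeZero p := ⟨hp.pos.ne'⟩
  have key : ((p - 1 : ℕ) : ZMod p) + 1 = 0 := by
    have h1 : p - 1 + 1 = p := Nat.sub_add_cancel hp.one_lt.le
    calc ((p - 1 : ℕ) : ZMod p) + 1 = ((p - 1 + 1 : ℕ) : ZMod p) := by push_cast; ring
      _ = 0 := by rw [h1, ZMod.natCast_self]
  funext x i
  simp only [H]
  have hv : i.val < p := ZMod.val_lt i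
  by_cases h : i.val < p - 1
  · rw [if_pos h]
  · have hiv : i.val = p - 1 := by omega
    have hi : i = ((p - 1 : ℕ) : ZMod p) := by rw [← ZMod.natCast_zmod_val i, hiv]
    rw [if_neg h, if_pos hiv, neg_one_pow hp, one_mul, hi, key]

end CyclicShiftAux

theorem cyclic_shift_from_cnots (p : ℕ) (hp : p.Prime) :
    ∃ L : List (ZMod p × ZMod p),
      (∀ pr ∈ L, pr.1 ≠ pr.2) ∧
      L.foldr
          (fun pr (f : (ZMod p → ZMod p) → (ZMod p → ZMod p)) =>
            (fun x => Function.update x pr.2 (x pr.2 + x pr.1)) ∘ f)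
          id =
        fun x : ZMod p → ZMod p => fun i => x (i + 1) := by
  haveI : NeZero p := ⟨hp.pos.ne'⟩
  obtain ⟨L, hL, hE⟩ := CyclicShiftAux.Rz_H (p := p) (p - 1) (by have := hp.one_lt; omega)
  refine ⟨L, hL, ?_⟩
  show CyclicShiftAux.evalL L = _
  rw [hE, CyclicShiftAux.H_top hp]
end

section
/- Let d ≥ 2 and define on (ℤ/dℤ)^d the doubly-indexed values i j k by i 0 k arbitrary, and Stage-2 recursion i j 0 = i (j-1) 0, i j k = i j (k-1) + i (j-1) k for j = 1,…,d-1. Then i (d-1) k = ∑_{m=0}^{k} binom(k-m+d-2, d-2) · i 0 m (mod d). -/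
/-!
Each row of the Stage-2 recursion is the running sum of the previous one, so the final row is the
`(d-1)`-fold iterated prefix sum of row `0`. By the hockey-stick identity, `j + 1` iterated prefix
sums of a sequence `x` are the convolution of `x` with `n ↦ (n + j).choose j`.
-/

open Finset

section PrefixSums

variable {M : Type*} [AddCommMonoid M]

theorem eq_sum_range_of_add_eq (f g : ℕ → M) (K : ℕ) (h0 : f 0 = g 0)
    (hsucc : ∀ k < K, f (k + 1) = f k + g (k + 1)) :
    ∀ k ≤ K, f k = ∑ m ∈ range (k + 1), g m := by
  intro k hk
  induction k with
  | zero => simpa using h0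
  | succ k ih => rw [hsucc k hk, ih (by omega), sum_range_succ _ (k + 1)]

theorem sum_range_sum_range_choose_smul (x : ℕ → M) (j k : ℕ) :
    ∑ l ∈ range (k + 1), ∑ m ∈ range (l + 1), (l - m + j).choose j • x m =
      ∑ m ∈ range (k + 1), (k - m + (j + 1)).choose (j + 1) • x m := by
  induction k with
  | zero => simp
  | succ k ih =>
    rw [sum_range_succ, ih, sum_range_succ _ (k + 1), sum_range_succ _ (k + 1), Nat.sub_self,
      zero_add, zero_add, Nat.choose_self, Nat.choose_self, ← add_assoc, ← sum_add_distrib]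
    congr 1
    refine sum_congr rfl fun m hm => ?_
    have hmk : m ≤ k := Nat.lt_succ_iff.1 (mem_range.1 hm)
    rw [← add_smul, show k + 1 - m + j = k - m + (j + 1) by omega,
      show k + 1 - m + (j + 1) = k - m + (j + 1) + 1 by omega, Nat.choose_succ_succ',
      add_comm ((k - m + (j + 1)).choose j)]

theorem eq_sum_range_choose_smul_of_add_eq (a : ℕ → ℕ → M) (J K : ℕ)
    (h0 : ∀ j < J, a (j + 1) 0 = a j 0)
    (hsucc : ∀ j < J, ∀ k < K, a (j + 1) (k + 1) = a (j + 1) k + a j (k + 1)) :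
    ∀ j < J, ∀ k ≤ K, a (j + 1) k = ∑ m ∈ range (k + 1), (k - m + j).choose j • a 0 m := by
  intro j hj
  induction j with
  | zero => simpa using eq_sum_range_of_add_eq _ _ K (h0 0 hj) (hsucc 0 hj)
  | succ j ih =>
    intro k hk
    rw [eq_sum_range_of_add_eq _ _ K (h0 _ hj) (hsucc _ hj) k hk, ← sum_range_sum_range_choose_smul]
    exact sum_congr rfl fun l hl => ih (by omega) l (by have := mem_range.1 hl; omega)

end PrefixSums

theorem stage2_final_state (d : ℕ) (hd : 2 ≤ d) (i : ℕ → ℕ → ZMod d)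
    (h0 : ∀ j, 1 ≤ j → j ≤ d - 1 → i j 0 = i (j - 1) 0)
    (hrec : ∀ j, 1 ≤ j → j ≤ d - 1 → ∀ k, 1 ≤ k → k ≤ d - 1 →
      i j k = i j (k - 1) + i (j - 1) k) :
    ∀ k, k ≤ d - 1 →
      i (d - 1) k = ∑ m ∈ Finset.range (k + 1),
        (Nat.choose (k - m + d - 2) (d - 2) : ZMod d) * i 0 m := by
  obtain ⟨n, rfl⟩ : ∃ n, d = n + 2 := ⟨d - 2, by omega⟩
  intro k hk
  have hrow := eq_sum_range_choose_smul_of_add_eq i (n + 1) (n + 1)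
    (fun j hj => h0 (j + 1) (by omega) (by omega))
    (fun j hj l hl => hrec (j + 1) (by omega) (by omega) (l + 1) (by omega) (by omega)) n
    (by omega) k (by omega)
  simp only [nsmul_eq_mul] at hrow
  exact hrow
end

section
/- Let p be an odd prime. Define i^d_k for k odd by i^d_k = ∑_{t=0}^{(k-1)/2} ∑_{m=0}^{2t+1} binom(2t+1-m+p-2, p-2) · x_m. Then i^d_k ≡ ∑_{t=0}^{(k-1)/2} ((p-1)·x_{2t} + x_{2t+1}) (mod p) for any integers x_m, i.e. the inner sum restricts mod p to indices m ∈ {2t, 2t+1}. -/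
theorem stage3_odd_k (p : ℕ) (hp : p.Prime) (hodd : Odd p)
    (k : ℕ) (hk1 : 1 ≤ k) (hk2 : k ≤ p - 1) (hkodd : Odd k) (x : ℕ → ℤ) :
    ∑ t ∈ Finset.range ((k - 1) / 2 + 1), ∑ m ∈ Finset.range (2 * t + 2),
        (Nat.choose (2 * t + 1 - m + p - 2) (p - 2) : ℤ) * x m ≡
      ∑ t ∈ Finset.range ((k - 1) / 2 + 1),
        (((p : ℤ) - 1) * x (2 * t) + x (2 * t + 1))
      [ZMOD (p : ℤ)] := by
  have hp3 : 3 ≤ p := by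
    rcases hodd with ⟨r, hr⟩
    have := hp.two_le
    omega
  rw [← ZMod.intCast_eq_intCast_iff]
  push_cast
  apply Finset.sum_congr rfl
  intro t ht
  have htk : 2 * t + 1 ≤ p - 1 := by
    rcases hkodd with ⟨s, hs⟩
    simp only [Finset.mem_range] at ht
    omega
  rw [show 2 * t + 2 = (2 * t) + 1 + 1 from rfl, Finset.sum_range_succ,
    Finset.sum_range_succ]
  have h1 : 2 * t + 1 - (2 * t + 1) + p - 2 = p - 2 := by omega
  have h2 : 2 * t + 1 - 2 * t + p - 2 = p - 1 := by omega
  have h3 : (p - 1).choose (p - 2) = p - 1 := by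
    have := Nat.choose_symm (n := p - 1) (k := p - 2) (by omega)
    rw [show p - 1 - (p - 2) = 1 by omega, Nat.choose_one_right] at this
    omega
  have hz : ∑ m ∈ Finset.range (2 * t),
      ((Nat.choose (2 * t + 1 - m + p - 2) (p - 2) : ℕ) : ZMod p) * ((x m : ℤ) : ZMod p) = 0 := by
    apply Finset.sum_eq_zero
    intro m hm
    simp only [Finset.mem_range] at hm
    have hdvd : p ∣ Nat.choose (2 * t + 1 - m + p - 2) (p - 2) :=
      hp.dvd_choose (by omega) (by omega) (by omega)
    rw [(ZMod.natCast_eq_zero_iff _ _).mpr hdvd, zero_mul]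
  rw [hz, zero_add, h1, h2, Nat.choose_self, h3]
  have hm1 : ((p - 1 : ℕ) : ZMod p) = -1 := by
    rw [Nat.cast_sub (by omega : 1 ≤ p), ZMod.natCast_self, Nat.cast_one, zero_sub]
  have hpz : ((p : ℕ) : ZMod p) = 0 := ZMod.natCast_self p
  push_cast [hm1]
  rw [hpz]
  ring
end

section
/- Let p be a prime and k ≤ p-2. Then ∑_{l=0}^{k+1} ∑_{m=0}^{l} binom(l-m+p-2, p-2) · x_m = ∑_{m=0}^{k+1} binom(k-m+p, p-1) · x_m for all integers x_m, and consequently this sum is ≡ x_{k+1} (mod p). -/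
/-!
Exchanging the two summations and summing the inner column with the hockey-stick identity turns
the double sum into `∑ m, C(k + p - m, p - 1) x_m`. For `m ≤ k ≤ p - 2` the top entry lies in
`[p, 2p - 2]`, so `C(k + p - m, p - 1)` is divisible by `p`, while the last coefficient is
`C(p - 1, p - 1) = 1`.
-/

open Finset

theorem Finset.sum_range_sum_range_choose_mul {R : Type*} [Semiring R] (r n : ℕ) (x : ℕ → R) :
    ∑ l ∈ range (n + 1), ∑ m ∈ range (l + 1), ((l - m + r).choose r : R) * x m =
      ∑ m ∈ range (n + 1), ((n - m + r + 1).choose (r + 1) : R) * x m := by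
  simp only [range_eq_Ico, ← sum_Ico_Ico_comm, ← sum_mul]
  refine sum_congr rfl fun m hm => ?_
  have hmn : n + 1 - m = n - m + 1 := by
    have := (mem_Ico.1 hm).2
    omega
  rw [sum_Ico_eq_sum_range, hmn]
  simp only [add_tsub_cancel_left]
  rw [← Nat.cast_sum, Nat.sum_range_add_choose]

theorem stage4_final (p : ℕ) (hp : p.Prime) (k : ℕ) (hk : k ≤ p - 2)
    (x : ℕ → ℤ) :
    (∑ l ∈ Finset.range (k + 2), ∑ m ∈ Finset.range (l + 1),
        (Nat.choose (l - m + p - 2) (p - 2) : ℤ) * x m =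
      ∑ m ∈ Finset.range (k + 2), (Nat.choose (k + p - m) (p - 1) : ℤ) * x m) ∧
    (∑ l ∈ Finset.range (k + 2), ∑ m ∈ Finset.range (l + 1),
        (Nat.choose (l - m + p - 2) (p - 2) : ℤ) * x m ≡
      x (k + 1) [ZMOD (p : ℤ)]) := by
  have hp2 := hp.two_le
  have hshift : ∀ l m : ℕ, l - m + p - 2 = l - m + (p - 2) := fun _ _ => by omega
  have hsum : ∑ l ∈ range (k + 2), ∑ m ∈ range (l + 1),
        ((l - m + p - 2).choose (p - 2) : ℤ) * x m =
      ∑ m ∈ range (k + 2), ((k + p - m).choose (p - 1) : ℤ) * x m := by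
    simp only [hshift, sum_range_sum_range_choose_mul]
    refine sum_congr rfl fun m hm => ?_
    have := mem_range.1 hm
    rw [show k + 1 - m + (p - 2) + 1 = k + p - m by omega, show p - 2 + 1 = p - 1 by omega]
  have hdvd : (p : ℤ) ∣ ∑ m ∈ range (k + 1), ((k + p - m).choose (p - 1) : ℤ) * x m :=
    dvd_sum fun m hm => by
      have := mem_range.1 hm
      exact dvd_mul_of_dvd_left
        (Int.natCast_dvd_natCast.2 (hp.dvd_choose (by omega) (by omega) (by omega))) _
  refine ⟨hsum, ?_⟩
  rw [hsum, sum_range_succ, show k + p - (k + 1) = p - 1 by omega, Nat.choose_self]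
  simpa using (Int.modEq_zero_iff_dvd.2 hdvd).add_right (x (k + 1))
end

section
/- Let d be even. Define a_s recursively by a_s = d - [binom(s+2+d-2, d-2) + ∑_{t=0}^{s-1} a_t · binom(s-t+d-2, d-2)] + (-1)^s (mod d). Then for all k with 0 ≤ k ≤ d-1, ∑_{m=0}^{k} binom(k-m+d-2, d-2) x_m + ∑_{s=0}^{k-2} a_s ∑_{m=0}^{k-2-s} binom(k-2-s-m+d-2, d-2) x_m ≡ ∑_{m=0}^{k} (-1)^{k-m} x_m (mod d) for all integers x_0,…,x_{d-1}. -/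
/-!
Reduce modulo `d` and write `c j = binom(j + d - 2, d - 2)`. Exchanging the order of summation,
the left-hand side becomes `∑ m, K (k - m) * x m` with `K j = c j + ∑_{s < j - 1} a s * c (j - 2 - s)`.
Since `c 0 = 1`, `c 1 = d - 1 ≡ -1` and the term `s = j - 2` of `K j` is `a (j - 2)`, the recursion
defining `a` says precisely that `K j ≡ (-1) ^ j` for every `j`.
-/

open Finset

theorem sum_range_mul_sum_range_comm {R : Type*} [CommSemiring R] (a c x : ℕ → R) (k : ℕ) :
    ∑ s ∈ range (k - 1), a s * ∑ m ∈ range (k - 2 - s + 1), c (k - 2 - s - m) * x m =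
      ∑ m ∈ range (k + 1), (∑ s ∈ range (k - m - 1), a s * c (k - m - 2 - s)) * x m := by
  simp_rw [mul_sum, sum_mul]
  rw [sum_comm' (t' := range (k + 1)) (s' := fun m ↦ range (k - m - 1))]
  · refine sum_congr rfl fun m hm ↦ sum_congr rfl fun s hs ↦ ?_
    rw [mem_range] at hm hs
    rw [show k - 2 - s - m = k - m - 2 - s by omega, mul_assoc]
  · intro s m
    simp only [mem_range]
    omega

theorem add_sum_range_mul_eq_neg_one_pow {R : Type*} [CommRing R] (a c : ℕ → R)
    (hc0 : c 0 = 1) (hc1 : c 1 = -1)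
    (ha : ∀ s, a s = -(c (s + 2) + ∑ t ∈ range s, a t * c (s - t)) + (-1) ^ s) :
    ∀ j, c j + ∑ s ∈ range (j - 1), a s * c (j - 2 - s) = (-1) ^ j
  | 0 => by simp [hc0]
  | 1 => by simp [hc1]
  | n + 2 => by
    have hshift : ∀ s ∈ range n, a s * c (n + 2 - 2 - s) = a s * c (n - s) := fun s _ ↦ by
      congr 2
    rw [show n + 2 - 1 = n + 1 by rfl, sum_range_succ, sum_congr rfl hshift,
      show n + 2 - 2 - n = 0 by omega, hc0, ha n]
    ring

theorem ZMod.natCast_choose_pred_sub_two {d : ℕ} (hd : 2 ≤ d) :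
    (((d - 1).choose (d - 2) : ℕ) : ZMod d) = -1 := by
  obtain ⟨n, rfl⟩ : ∃ n, d = n + 2 := ⟨d - 2, by omega⟩
  rw [show n + 2 - 1 = n + 1 by rfl, Nat.add_sub_cancel, Nat.choose_succ_self_right,
    eq_neg_iff_add_eq_zero, ← Nat.cast_succ, ZMod.natCast_self]

theorem even_stage3_general (d : ℕ) (hd2 : 2 ≤ d) (a : ℕ → ℤ)
    (ha : ∀ s, a s ≡
      (d : ℤ) - ((Nat.choose (s + 2 + d - 2) (d - 2) : ℤ) +
        ∑ t ∈ Finset.range s, a t * (Nat.choose (s - t + d - 2) (d - 2) : ℤ)) +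
        (-1) ^ s [ZMOD (d : ℤ)]) :
    ∀ k, k ≤ d - 1 → ∀ x : ℕ → ℤ,
      (∑ m ∈ Finset.range (k + 1),
          (Nat.choose (k - m + d - 2) (d - 2) : ℤ) * x m) +
        ∑ s ∈ Finset.range (k - 1), a s *
          ∑ m ∈ Finset.range (k - 2 - s + 1),
            (Nat.choose (k - 2 - s - m + d - 2) (d - 2) : ℤ) * x m ≡
      ∑ m ∈ Finset.range (k + 1), (-1 : ℤ) ^ (k - m) * x m
      [ZMOD (d : ℤ)] := by
  intro k _ x
  simp_rw [← ZMod.intCast_eq_intCast_iff] at ha ⊢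
  push_cast at ha ⊢
  have hkernel := add_sum_range_mul_eq_neg_one_pow (fun s ↦ (a s : ZMod d))
    (fun j ↦ ((j + d - 2).choose (d - 2) : ZMod d))
    (by simp)
    (by simpa [show 1 + d - 2 = d - 1 by omega] using ZMod.natCast_choose_pred_sub_two hd2)
    (fun s ↦ by rw [ha s, ZMod.natCast_self, zero_sub])
  have hswap := sum_range_mul_sum_range_comm (fun s ↦ (a s : ZMod d))
    (fun j ↦ ((j + d - 2).choose (d - 2) : ZMod d)) (fun m ↦ (x m : ZMod d)) k
  rw [hswap, ← sum_add_distrib]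
  exact sum_congr rfl fun m _ ↦ by rw [← add_mul, hkernel]

theorem even_stage3 (d : ℕ) (hd : Even d) (hd2 : 2 ≤ d) (a : ℕ → ℤ)
    (ha : ∀ s, a s ≡
      (d : ℤ) - ((Nat.choose (s + 2 + d - 2) (d - 2) : ℤ) +
        ∑ t ∈ Finset.range s, a t * (Nat.choose (s - t + d - 2) (d - 2) : ℤ)) +
        (-1) ^ s [ZMOD (d : ℤ)]) :
    ∀ k, k ≤ d - 1 → ∀ x : ℕ → ℤ,
      (∑ m ∈ Finset.range (k + 1),
          (Nat.choose (k - m + d - 2) (d - 2) : ℤ) * x m) +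
        ∑ s ∈ Finset.range (k - 1), a s *
          ∑ m ∈ Finset.range (k - 2 - s + 1),
            (Nat.choose (k - 2 - s - m + d - 2) (d - 2) : ℤ) * x m ≡
      ∑ m ∈ Finset.range (k + 1), (-1 : ℤ) ^ (k - m) * x m
      [ZMOD (d : ℤ)] :=
  even_stage3_general d hd2 a ha
end
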